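/- arXiv:1207.6583 — 5 statements merged into one kernel-verified Lean document; each statement's English description precedes it below -/
import Mathlib

section
/- Let S be a finite set of real numbers, f a Schwartz function, and K an integrable function with K(v) \ge |f(v)|^2 for all real v. Then \int_{-\infty}^{\infty} |\sum_{\gamma \in S} \hat{f}(t - \gamma)|^2 dt \le \sum_{\gamma, \gamma' \in S} \hat{K}(\gamma - \gamma'). -/
/-!
With `c(v) = ∑_{γ ∈ S} e(γ v)`, the function `t ↦ ∑_γ f̂(t - γ)` is the Schwartz function whose
inverse Fourier transform is `c · f`. Plancherel turns its mean square into `∫ |f|² |c|²`, which is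
at most `∫ K |c|²`; expanding `|c|² = ∑_{γ, γ'} e(-(γ - γ') v)` identifies the latter with the
pair sum of `K̂(γ - γ')`.
-/

open MeasureTheory Finset FourierTransform
open scoped RealInnerProductSpace

section FourierCharSum

variable {V : Type*} [NormedAddCommGroup V] [InnerProductSpace ℝ V]

noncomputable def fourierCharSum (S : Finset V) (w : V) : ℂ := ∑ γ ∈ S, (𝐞 ⟪γ, w⟫ : ℂ)

theorem continuous_fourierCharSum (S : Finset V) : Continuous (fourierCharSum S) := by
  unfold fourierCharSum; fun_prop

theorem norm_fourierCharSum_le (S : Finset V) (w : V) : ‖fourierCharSum S w‖ ≤ #S :=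
  (norm_sum_le _ _).trans_eq (by simp [Circle.norm_coe])

theorem sq_norm_fourierCharSum (S : Finset V) (v : V) :
    (‖fourierCharSum S v‖ : ℂ) ^ 2 = ∑ γ ∈ S, ∑ γ' ∈ S, (𝐞 (-⟪v, γ - γ'⟫) : ℂ) := by
  rw [← Complex.conj_mul', fourierCharSum, map_sum, sum_mul_sum]
  refine sum_congr rfl fun γ _ => sum_congr rfl fun γ' _ => ?_
  rw [← Circle.coe_inv_eq_conj, ← AddChar.map_neg_eq_inv, ← Circle.coe_mul,
    ← AddChar.map_add_eq_mul, inner_sub_right, real_inner_comm γ, real_inner_comm γ']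
  ring_nf

theorem MeasureTheory.Integrable.mul_sq_norm_fourierCharSum [MeasurableSpace V]
    [OpensMeasurableSpace V] {μ : Measure V} {K : V → ℝ} (hK : Integrable K μ) (S : Finset V) :
    Integrable (fun v => K v * ‖fourierCharSum S v‖ ^ 2) μ := by
  refine (hK.bdd_mul (c := (#S : ℝ) ^ 2) ?_ (ae_of_all _ fun v => ?_)).congr
    (ae_of_all _ fun v => mul_comm _ _)
  · exact ((continuous_fourierCharSum S).norm.pow 2).aestronglyMeasurable
  · simpa using pow_le_pow_left₀ (norm_nonneg _) (norm_fourierCharSum_le S v) 2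

end FourierCharSum

section Fourier

variable {V E : Type*} [NormedAddCommGroup V] [InnerProductSpace ℝ V] [FiniteDimensional ℝ V]
  [MeasurableSpace V] [BorelSpace V] [NormedAddCommGroup E] [NormedSpace ℂ E]

theorem integral_mul_sq_norm_fourierCharSum (S : Finset V) {K : V → ℝ} (hK : Integrable K) :
    ∫ v, K v * ‖fourierCharSum S v‖ ^ 2 =
      (∑ γ ∈ S, ∑ γ' ∈ S, 𝓕 (fun v => (K v : ℂ)) (γ - γ')).re := by
  have hint (ξ : V) : Integrable fun v => 𝐞 (-⟪v, ξ⟫) • (K v : ℂ) :=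
    (Real.fourierIntegral_convergent_iff ξ).2 hK.ofReal
  have hℂ : ∫ v, ((K v * ‖fourierCharSum S v‖ ^ 2 : ℝ) : ℂ) =
      ∑ γ ∈ S, ∑ γ' ∈ S, 𝓕 (fun v => (K v : ℂ)) (γ - γ') := by
    simp_rw [Real.fourier_eq, ← integral_finsetSum _ fun _ _ => hint _,
      ← integral_finsetSum _ fun _ _ => integrable_finsetSum _ fun _ _ => hint _]
    congr 1 with v
    rw [Complex.ofReal_mul, Complex.ofReal_pow, sq_norm_fourierCharSum, mul_sum]
    simp_rw [mul_sum, Circle.smul_def, smul_eq_mul, mul_comm]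
  rw [← hℂ, integral_complex_ofReal, Complex.ofReal_re]

namespace SchwartzMap

theorem fourierInv_compSubConstCLM (φ : 𝓢(V, E)) (a w : V) :
    𝓕⁻ (compSubConstCLM ℂ a φ) w = 𝐞 ⟪a, w⟫ • 𝓕⁻ φ w := by
  simp only [fourierInv_coe, Real.fourierInv_eq, compSubConstCLM_apply, Circle.smul_def]
  rw [← integral_smul, ← integral_add_right_eq_self _ a]
  simp [smul_smul, ← Circle.coe_mul, ← AddChar.map_add_eq_mul, inner_add_left, add_comm]

theorem fourierInv_sum_compSubConstCLM_fourier [CompleteSpace E] (S : Finset V) (f : 𝓢(V, E))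
    (w : V) : 𝓕⁻ (∑ γ ∈ S, compSubConstCLM ℂ γ (𝓕 f)) w = fourierCharSum S w • f w := by
  simp [fourierInv_compSubConstCLM, fourierCharSum, sum_smul, Circle.smul_def]

theorem integral_norm_sq_fourierInv {H : Type*} [NormedAddCommGroup H] [InnerProductSpace ℂ H]
    [CompleteSpace H] (f : 𝓢(V, H)) : ∫ x, ‖𝓕⁻ f x‖ ^ 2 = ∫ ξ, ‖f ξ‖ ^ 2 := by
  conv_rhs => rw [← fourier_fourierInv_eq (E := 𝓢(V, H)) (F := 𝓢(V, H)) f]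
  exact (integral_norm_sq_fourier (𝓕⁻ f)).symm

end SchwartzMap

end Fourier

/-- mean square of a sum of shifted Fourier transforms is bounded by
the pair sum of the Fourier transform of a majorant `K` of `|f|²`. -/
theorem meansquare_le_pair_sum
    (S : Finset ℝ) (f : SchwartzMap ℝ ℂ) (K : ℝ → ℝ)
    (hK1 : MeasureTheory.Integrable K)
    (hK2 : ∀ v : ℝ, ‖f v‖ ^ 2 ≤ K v) :
    (∫ t : ℝ, ‖∑ γ ∈ S, FourierTransform.fourier (⇑f : ℝ → ℂ) (t - γ)‖ ^ 2) ≤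
      (∑ γ ∈ S, ∑ γ' ∈ S,
        FourierTransform.fourier (fun x : ℝ => (K x : ℂ)) (γ - γ')).re := by
  set T := ∑ γ ∈ S, SchwartzMap.compSubConstCLM ℂ γ (𝓕 f)
  have hT (t : ℝ) : T t = ∑ γ ∈ S, 𝓕 (⇑f) (t - γ) := by simp [T, SchwartzMap.fourier_coe]
  calc ∫ t, ‖∑ γ ∈ S, 𝓕 (⇑f) (t - γ)‖ ^ 2
      = ∫ x, ‖𝓕⁻ T x‖ ^ 2 := by
        simp_rw [← hT]; exact (SchwartzMap.integral_norm_sq_fourierInv T).symm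
    _ = ∫ x, ‖f x‖ ^ 2 * ‖fourierCharSum S x‖ ^ 2 := by
        simp_rw [T, SchwartzMap.fourierInv_sum_compSubConstCLM_fourier, norm_smul, mul_pow,
          mul_comm]
    _ ≤ ∫ x, K x * ‖fourierCharSum S x‖ ^ 2 :=
        integral_mono_of_nonneg (ae_of_all _ fun _ => by positivity)
          (hK1.mul_sq_norm_fourierCharSum S)
          (ae_of_all _ fun x => mul_le_mul_of_nonneg_right (hK2 x) (by positivity))
    _ = _ := integral_mul_sq_norm_fourierCharSum S hK1
end

section
/- Let N be a positive integer and a : \{1, ..., N\} \to \mathbb{C} an arbitrary sequence. For each \ell \le N define y(\ell) = \sum_{d \le N/\ell} a(d\ell)/d (and y(\ell) = 0 for \ell > N). Then \sum_{d, e \le N} a(d) \overline{a(e)} / \mathrm{lcm}(d,e) = \sum_{\ell \le N} (\varphi(\ell)/\ell^2) |y(\ell)|^2. -/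
open Finset

/-!
Since `1 / lcm(d, e) = gcd(d, e) / (d e)` and `gcd(d, e) = ∑_{ℓ ∣ d, ℓ ∣ e} φ(ℓ)`, the kernel
`1 / lcm` is a sum over `ℓ` of the rank-one kernels `φ(ℓ) 1[ℓ ∣ d] 1[ℓ ∣ e] / (d e)`. The `ℓ`-th
one contributes `φ(ℓ) |∑_{ℓ ∣ d ≤ N} a(d) / d|²`, and writing `d = m ℓ` turns the inner sum into
`y(ℓ) / ℓ`.
-/

theorem Nat.Icc_filter_dvd_eq_map (N ℓ : ℕ) (hℓ : 0 < ℓ) :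
    {d ∈ Icc 1 N | ℓ ∣ d} = (Icc 1 (N / ℓ)).map ⟨(· * ℓ), mul_left_injective₀ hℓ.ne'⟩ := by
  ext d
  simp only [mem_filter, mem_Icc, mem_map, Function.Embedding.coeFn_mk]
  constructor
  · rintro ⟨⟨hd1, hdN⟩, m, rfl⟩
    refine ⟨m, ⟨?_, (Nat.le_div_iff_mul_le hℓ).2 (by linarith)⟩, mul_comm _ _⟩
    rcases m with _ | m <;> simp_all
  · rintro ⟨m, ⟨hm1, hmN⟩, rfl⟩
    exact ⟨⟨Nat.one_le_iff_ne_zero.2 (by positivity), (Nat.le_div_iff_mul_le hℓ).1 hmN⟩,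
      dvd_mul_left _ _⟩

theorem Nat.Icc_filter_dvd_and_dvd_eq_divisors_gcd {N d : ℕ} (hd : 0 < d) (hdN : d ≤ N) (e : ℕ) :
    {ℓ ∈ Icc 1 N | ℓ ∣ d ∧ ℓ ∣ e} = (d.gcd e).divisors := by
  have hg : 0 < d.gcd e := Nat.gcd_pos_of_pos_left e hd
  ext ℓ
  simp only [mem_filter, mem_Icc, Nat.mem_divisors, ← Nat.dvd_gcd_iff]
  constructor
  · rintro ⟨-, h⟩
    exact ⟨h, hg.ne'⟩
  · rintro ⟨h, -⟩
    exact ⟨⟨Nat.pos_of_dvd_of_pos h hg,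
      (Nat.le_of_dvd hg h).trans ((Nat.gcd_le_left e hd).trans hdN)⟩, h⟩

theorem Nat.gcd_eq_sum_totient_Icc {N d : ℕ} (hd : 0 < d) (hdN : d ≤ N) (e : ℕ) :
    d.gcd e = ∑ ℓ ∈ Icc 1 N with ℓ ∣ d ∧ ℓ ∣ e, Nat.totient ℓ := by
  rw [Nat.Icc_filter_dvd_and_dvd_eq_divisors_gcd hd hdN, Nat.sum_totient]

theorem Nat.cast_inv_lcm {K : Type*} [Field K] [CharZero K] {d e : ℕ} (hd : d ≠ 0) (he : e ≠ 0) :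
    ((d.lcm e : ℕ) : K)⁻¹ = d.gcd e / (d * e) := by
  have hlcm : ((d.lcm e : ℕ) : K) ≠ 0 := Nat.cast_ne_zero.2 (Nat.lcm_ne_zero hd he)
  rw [eq_div_iff (by positivity), ← Nat.cast_mul, ← Nat.gcd_mul_lcm, Nat.cast_mul,
    mul_comm, mul_inv_cancel_right₀ hlcm]

theorem sum_sum_mul_conj_mul_sum_eq_sum_mul_norm_sq {𝕜 ι κ : Type*} [RCLike 𝕜]
    (s : Finset ι) (t : Finset κ) (P : κ → ι → Prop) [∀ ℓ, DecidablePred (P ℓ)]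
    (w : κ → 𝕜) (b : ι → 𝕜) :
    ∑ d ∈ s, ∑ e ∈ s, b d * starRingEnd 𝕜 (b e) * ∑ ℓ ∈ t with P ℓ d ∧ P ℓ e, w ℓ =
      ∑ ℓ ∈ t, w ℓ * (‖∑ d ∈ s with P ℓ d, b d‖ ^ 2 : ℝ) := by
  simp_rw [RCLike.ofReal_pow, ← RCLike.mul_conj]
  calc _ = ∑ d ∈ s, ∑ e ∈ s, ∑ ℓ ∈ t,
        if P ℓ d ∧ P ℓ e then w ℓ * (b d * starRingEnd 𝕜 (b e)) else 0 := by
        simp_rw [sum_filter, mul_sum, mul_ite, mul_zero, mul_comm]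
    _ = ∑ ℓ ∈ t, ∑ d ∈ s, ∑ e ∈ s,
        if P ℓ d ∧ P ℓ e then w ℓ * (b d * starRingEnd 𝕜 (b e)) else 0 :=
        sum_comm_cycle
    _ = _ := by
        refine sum_congr rfl fun ℓ _ => ?_
        simp_rw [map_sum, sum_mul_sum, mul_sum, sum_filter, ite_and]
        refine sum_congr rfl fun d _ => ?_
        split_ifs <;> simp

theorem Nat.sum_Icc_filter_dvd_div_cast {K : Type*} [Field K] [CharZero K] (N : ℕ) {ℓ : ℕ}
    (hℓ : 0 < ℓ) (a : ℕ → K) :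
    ∑ d ∈ Icc 1 N with ℓ ∣ d, a d / d = (∑ m ∈ Icc 1 (N / ℓ), a (m * ℓ) / m) / ℓ := by
  rw [Nat.Icc_filter_dvd_eq_map N ℓ hℓ, sum_map, sum_div]
  refine sum_congr rfl fun m _ => ?_
  simp [div_div]

theorem quadratic_form_diagonalization_general (N : ℕ) (a : ℕ → ℂ) :
    (∑ d ∈ Finset.Icc 1 N, ∑ e ∈ Finset.Icc 1 N,
        a d * (starRingEnd ℂ) (a e) / (Nat.lcm d e : ℂ)) =
      ∑ ℓ ∈ Finset.Icc 1 N, ((Nat.totient ℓ : ℂ) / (ℓ : ℂ) ^ 2) *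
        ((‖∑ d ∈ Finset.Icc 1 (N / ℓ), a (d * ℓ) / (d : ℂ)‖ ^ 2 : ℝ) : ℂ) := by
  calc _ = ∑ d ∈ Icc 1 N, ∑ e ∈ Icc 1 N, a d / d * starRingEnd ℂ (a e / e) *
        ∑ ℓ ∈ Icc 1 N with ℓ ∣ d ∧ ℓ ∣ e, (Nat.totient ℓ : ℂ) := by
        refine sum_congr rfl fun d hd => sum_congr rfl fun e he => ?_
        rw [mem_Icc] at hd he
        rw [← Nat.cast_sum, ← Nat.gcd_eq_sum_totient_Icc hd.1 hd.2, div_eq_mul_inv,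
          Nat.cast_inv_lcm (by omega) (by omega), map_div₀, Complex.conj_natCast]
        ring
    _ = ∑ ℓ ∈ Icc 1 N, (Nat.totient ℓ : ℂ) * (‖∑ d ∈ Icc 1 N with ℓ ∣ d, a d / d‖ ^ 2 : ℝ) :=
        sum_sum_mul_conj_mul_sum_eq_sum_mul_norm_sq _ _ _ _ _
    _ = _ := by
        refine sum_congr rfl fun ℓ hℓ => ?_
        rw [Nat.sum_Icc_filter_dvd_div_cast N (mem_Icc.1 hℓ).1, norm_div, Complex.norm_natCast]
        push_cast
        ring

/-- diagonalization of the quadratic form `∑ a(d) conj(a(e))/lcm(d,e)`. -/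
theorem quadratic_form_diagonalization (N : ℕ) (hN : 0 < N) (a : ℕ → ℂ) :
    (∑ d ∈ Finset.Icc 1 N, ∑ e ∈ Finset.Icc 1 N,
        a d * (starRingEnd ℂ) (a e) / (Nat.lcm d e : ℂ)) =
      ∑ ℓ ∈ Finset.Icc 1 N, ((Nat.totient ℓ : ℂ) / (ℓ : ℂ) ^ 2) *
        ((‖∑ d ∈ Finset.Icc 1 (N / ℓ), a (d * ℓ) / (d : ℂ)‖ ^ 2 : ℝ) : ℂ) :=
  quadratic_form_diagonalization_general N a
end

section
/- Let N \ge 1 and G = \sum_{n \le N} \mu(n)^2 / \varphi(n). For any complex sequence (a(n))_{n \le N} with a(1) = 1, one has \sum_{d, e \le N} a(d)\overline{a(e)}/\mathrm{lcm}(d,e) \ge 1/G, with equality attainable. -/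
/-!
Since `1 / lcm(d, e) = gcd(d, e) / (d e)` and `gcd(d, e) = ∑_{ℓ ∣ gcd(d, e)} φ(ℓ)`, the form
diagonalises as `∑_{ℓ ≤ N} φ(ℓ) |y(ℓ)|²` with `y(ℓ) = ∑_{ℓ ∣ d ≤ N} a(d) / d`. Möbius inversion
gives `∑_{ℓ ≤ N} μ(ℓ) y(ℓ) = a(1) = 1`, so Cauchy–Schwarz with weights `φ(ℓ)` yields
`1 ≤ G · ∑ φ(ℓ) |y(ℓ)|²`. Equality holds for `y(ℓ) = μ(ℓ) / (φ(ℓ) G)`, and every `y` on `[1, N]`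
comes from some `a`, by Möbius inversion over multiples.
-/

open Finset ArithmeticFunction
open scoped ArithmeticFunction.Moebius Nat

namespace Nat

theorem filter_Icc_dvd_eq_divisors {N d : ℕ} (hd : d ∈ Icc 1 N) :
    {ℓ ∈ Icc 1 N | ℓ ∣ d} = d.divisors := by
  rw [mem_Icc] at hd
  ext ℓ
  simp only [mem_filter, mem_Icc, mem_divisors]
  constructor
  · rintro ⟨-, hℓd⟩
    exact ⟨hℓd, by omega⟩
  · rintro ⟨hℓd, -⟩
    exact ⟨⟨pos_of_dvd_of_pos hℓd hd.1, (le_of_dvd hd.1 hℓd).trans hd.2⟩, hℓd⟩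

theorem sum_totient_filter_Icc_dvd_dvd {N d : ℕ} (hd : d ∈ Icc 1 N) (e : ℕ) :
    ∑ ℓ ∈ Icc 1 N with ℓ ∣ d ∧ ℓ ∣ e, φ ℓ = d.gcd e := by
  have hgcd : d.gcd e ∈ Icc 1 N := by
    rw [mem_Icc] at hd ⊢
    exact ⟨gcd_pos_of_pos_left e hd.1, (gcd_le_left e hd.1).trans hd.2⟩
  simp_rw [← dvd_gcd_iff, filter_Icc_dvd_eq_divisors hgcd, sum_totient]

theorem sum_sum_mul_div_lcm_eq_sum_totient_mul {K : Type*} [Field K] [CharZero K] (N : ℕ)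
    (b c : ℕ → K) :
    ∑ d ∈ Icc 1 N, ∑ e ∈ Icc 1 N, b d * c e / (d.lcm e : K) =
      ∑ ℓ ∈ Icc 1 N, (φ ℓ : K) *
        ((∑ d ∈ Icc 1 N with ℓ ∣ d, b d / d) * ∑ e ∈ Icc 1 N with ℓ ∣ e, c e / e) := by
  have hterm : ∀ d ∈ Icc 1 N, ∀ e ∈ Icc 1 N, b d * c e / (d.lcm e : K) =
      ∑ ℓ ∈ Icc 1 N, if ℓ ∣ d ∧ ℓ ∣ e then (φ ℓ : K) * (b d / d * (c e / e)) else 0 := by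
    intro d hd e he
    rw [← sum_filter, ← sum_mul, ← cast_sum, sum_totient_filter_Icc_dvd_dvd hd]
    have hd0 : (d : K) ≠ 0 := cast_ne_zero.2 (one_le_iff_ne_zero.1 (mem_Icc.1 hd).1)
    have he0 : (e : K) ≠ 0 := cast_ne_zero.2 (one_le_iff_ne_zero.1 (mem_Icc.1 he).1)
    have hgl : (d.gcd e : K) * d.lcm e = d * e := by exact_mod_cast gcd_mul_lcm d e
    have hl0 : (d.lcm e : K) ≠ 0 := right_ne_zero_of_mul (hgl ▸ mul_ne_zero hd0 he0)
    field_simp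
    linear_combination -(b d * c e) * hgl
  rw [sum_congr rfl fun d hd => sum_congr rfl (hterm d hd)]
  simp_rw [sum_filter, sum_mul_sum, mul_sum]
  conv_rhs => rw [sum_comm]
  refine sum_congr rfl fun d _ => ?_
  conv_rhs => rw [sum_comm]
  refine sum_congr rfl fun e _ => sum_congr rfl fun ℓ _ => ?_
  by_cases hℓd : ℓ ∣ d <;> by_cases hℓe : ℓ ∣ e <;> simp [hℓd, hℓe]

end Nat

namespace ArithmeticFunction

theorem sum_divisors_moebius {R : Type*} [Ring R] (n : ℕ) :
    ∑ d ∈ n.divisors, (μ d : R) = if n = 1 then 1 else 0 := by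
  have h : ∑ d ∈ n.divisors, μ d = if n = 1 then 1 else 0 := by
    rw [← coe_mul_zeta_apply, moebius_mul_coe_zeta, one_apply]
  exact_mod_cast congrArg (Int.cast : ℤ → R) h

theorem sum_divisors_filter_dvd_moebius_div {R : Type*} [Ring R] {ℓ : ℕ} (hℓ : ℓ ≠ 0) (m : ℕ) :
    ∑ d ∈ m.divisors with ℓ ∣ d, (μ (m / d) : R) = if m = ℓ then 1 else 0 := by
  by_cases hℓm : ℓ ∣ m
  · obtain ⟨k, rfl⟩ := hℓm
    have himage : {d ∈ (ℓ * k).divisors | ℓ ∣ d} = k.divisors.image (ℓ * ·) := by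
      ext d
      simp only [mem_filter, Nat.mem_divisors, mem_image]
      constructor
      · rintro ⟨⟨hdk, hk⟩, j, rfl⟩
        exact ⟨j, ⟨(Nat.mul_dvd_mul_iff_left (Nat.pos_of_ne_zero hℓ)).1 hdk,
          right_ne_zero_of_mul hk⟩, rfl⟩
      · rintro ⟨j, ⟨hjk, hk⟩, rfl⟩
        exact ⟨⟨mul_dvd_mul_left ℓ hjk, mul_ne_zero hℓ hk⟩, dvd_mul_right ℓ j⟩
    rw [himage, sum_image fun _ _ _ _ h => Nat.eq_of_mul_eq_mul_left (Nat.pos_of_ne_zero hℓ) h]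
    simp only [Nat.mul_div_mul_left _ _ (Nat.pos_of_ne_zero hℓ)]
    rw [Nat.sum_div_divisors k (fun j => (μ j : R)), sum_divisors_moebius]
    simp [hℓ]
  · rw [filter_false_of_mem fun d hd hℓd => hℓm (hℓd.trans (Nat.dvd_of_mem_divisors hd)),
      sum_empty, if_neg (by rintro rfl; exact hℓm dvd_rfl)]

theorem sum_moebius_mul_sum_filter_dvd {R : Type*} [CommRing R] {N : ℕ} (hN : 1 ≤ N)
    (f : ℕ → R) :
    ∑ ℓ ∈ Icc 1 N, (μ ℓ : R) * ∑ d ∈ Icc 1 N with ℓ ∣ d, f d = f 1 := by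
  simp_rw [sum_filter, mul_sum, mul_ite, mul_zero]
  rw [sum_comm]
  have hinner : ∀ d ∈ Icc 1 N, (∑ ℓ ∈ Icc 1 N, if ℓ ∣ d then (μ ℓ : R) * f d else 0) =
      if d = 1 then f d else 0 := by
    intro d hd
    rw [← sum_filter, ← sum_mul, Nat.filter_Icc_dvd_eq_divisors hd, sum_divisors_moebius, ite_mul,
      one_mul, zero_mul]
  rw [sum_congr rfl hinner, sum_ite_eq', if_pos (by simpa using hN)]

theorem sum_filter_dvd_sum_moebius_div_mul {R : Type*} [CommRing R] {N ℓ : ℕ}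
    (hℓ : ℓ ∈ Icc 1 N) (f : ℕ → R) :
    ∑ d ∈ Icc 1 N with ℓ ∣ d, ∑ m ∈ Icc 1 N with d ∣ m, (μ (m / d) : R) * f m = f ℓ := by
  have hinner : ∀ m ∈ Icc 1 N, (∑ d ∈ Icc 1 N with ℓ ∣ d ∧ d ∣ m, (μ (m / d) : R)) =
      if m = ℓ then 1 else 0 := by
    intro m hm
    rw [← sum_divisors_filter_dvd_moebius_div (Nat.one_le_iff_ne_zero.1 (mem_Icc.1 hℓ).1) m,
      ← Nat.filter_Icc_dvd_eq_divisors hm, filter_filter]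
    exact sum_congr (filter_congr fun _ _ => and_comm) fun _ _ => rfl
  rw [sum_comm' (t' := Icc 1 N) (s' := fun m => {d ∈ Icc 1 N | ℓ ∣ d ∧ d ∣ m})
    (by intro d m; simp only [mem_filter]; tauto)]
  simp_rw [← sum_mul]
  rw [sum_congr rfl fun m hm => by rw [hinner m hm, boole_mul], sum_ite_eq', if_pos hℓ]

end ArithmeticFunction

theorem exists_sum_filter_dvd_div_eq {K : Type*} [Field K] [CharZero K] (N : ℕ) (y : ℕ → K) :
    ∃ a : ℕ → K, ∀ ℓ ∈ Icc 1 N, ∑ d ∈ Icc 1 N with ℓ ∣ d, a d / d = y ℓ := by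
  refine ⟨fun d => d * ∑ m ∈ Icc 1 N with d ∣ m, (μ (m / d) : K) * y m, fun ℓ hℓ => ?_⟩
  rw [← sum_filter_dvd_sum_moebius_div_mul hℓ y]
  exact sum_congr rfl fun d hd => mul_div_cancel_left₀ _
    (Nat.cast_ne_zero.2 (Nat.one_le_iff_ne_zero.1 (mem_Icc.1 (mem_filter.1 hd).1).1))

theorem sq_norm_sum_mul_le {ι R : Type*} [SeminormedRing R] (s : Finset ι) {w : ι → ℝ}
    (hw : ∀ i ∈ s, 0 < w i) (c y : ι → R) :
    ‖∑ i ∈ s, c i * y i‖ ^ 2 ≤ (∑ i ∈ s, ‖c i‖ ^ 2 / w i) * ∑ i ∈ s, w i * ‖y i‖ ^ 2 := by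
  have htriangle : ‖∑ i ∈ s, c i * y i‖ ≤ ∑ i ∈ s, ‖c i‖ * ‖y i‖ :=
    (norm_sum_le _ _).trans (sum_le_sum fun i _ => norm_mul_le _ _)
  refine (pow_le_pow_left₀ (norm_nonneg _) htriangle 2).trans ?_
  refine sum_sq_le_sum_mul_sum_of_sq_le_mul s (fun i hi => by have := hw i hi; positivity)
    (fun i hi => by have := hw i hi; positivity) fun i hi => le_of_eq ?_
  field_simp [(hw i hi).ne']

noncomputable def mollifierForm (N : ℕ) (a : ℕ → ℂ) : ℂ :=
  ∑ d ∈ Icc 1 N, ∑ e ∈ Icc 1 N, a d * starRingEnd ℂ (a e) / (d.lcm e : ℂ)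

theorem re_mollifierForm (N : ℕ) (a : ℕ → ℂ) :
    (mollifierForm N a).re =
      ∑ ℓ ∈ Icc 1 N, (φ ℓ : ℝ) * ‖∑ d ∈ Icc 1 N with ℓ ∣ d, a d / d‖ ^ 2 := by
  have hconj : ∀ ℓ, ∑ e ∈ Icc 1 N with ℓ ∣ e, starRingEnd ℂ (a e) / e =
      starRingEnd ℂ (∑ e ∈ Icc 1 N with ℓ ∣ e, a e / e) := by
    intro ℓ
    simp only [map_sum, map_div₀, map_natCast]
  simp_rw [mollifierForm, Nat.sum_sum_mul_div_lcm_eq_sum_totient_mul, hconj, Complex.mul_conj',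
    Complex.re_sum]
  exact sum_congr rfl fun ℓ _ => by norm_cast

theorem sum_moebius_sq_div_totient_pos {N : ℕ} (hN : 1 ≤ N) :
    0 < ∑ n ∈ Icc 1 N, (μ n : ℝ) ^ 2 / φ n :=
  sum_pos' (fun n _ => by positivity) ⟨1, by simpa using hN, by simp⟩

theorem one_div_le_re_mollifierForm {N : ℕ} (hN : 1 ≤ N) {a : ℕ → ℂ} (ha : a 1 = 1) :
    1 / ∑ n ∈ Icc 1 N, (μ n : ℝ) ^ 2 / φ n ≤ (mollifierForm N a).re := by
  rw [div_le_iff₀ (sum_moebius_sq_div_totient_pos hN)]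
  have htotient : ∀ ℓ ∈ Icc 1 N, (0 : ℝ) < φ ℓ := fun ℓ hℓ =>
    Nat.cast_pos.2 (Nat.totient_pos.2 (mem_Icc.1 hℓ).1)
  calc (1 : ℝ) = ‖∑ ℓ ∈ Icc 1 N, (μ ℓ : ℂ) * ∑ d ∈ Icc 1 N with ℓ ∣ d, a d / d‖ ^ 2 := by
        rw [sum_moebius_mul_sum_filter_dvd hN]; simp [ha]
    _ ≤ (∑ ℓ ∈ Icc 1 N, ‖(μ ℓ : ℂ)‖ ^ 2 / φ ℓ) *
          ∑ ℓ ∈ Icc 1 N, (φ ℓ : ℝ) * ‖∑ d ∈ Icc 1 N with ℓ ∣ d, a d / d‖ ^ 2 :=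
        sq_norm_sum_mul_le _ htotient _ _
    _ = (mollifierForm N a).re * ∑ n ∈ Icc 1 N, (μ n : ℝ) ^ 2 / φ n := by
        simp_rw [re_mollifierForm, Complex.norm_intCast, sq_abs, mul_comm]

theorem exists_re_mollifierForm_eq {N : ℕ} (hN : 1 ≤ N) :
    ∃ a : ℕ → ℂ, a 1 = 1 ∧
      (mollifierForm N a).re = 1 / ∑ n ∈ Icc 1 N, (μ n : ℝ) ^ 2 / φ n := by
  set G := ∑ n ∈ Icc 1 N, (μ n : ℝ) ^ 2 / φ n with hG_def
  have hG : 0 < G := sum_moebius_sq_div_totient_pos hN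
  obtain ⟨a, ha⟩ := exists_sum_filter_dvd_div_eq N fun ℓ => (μ ℓ : ℂ) / (φ ℓ * G)
  refine ⟨a, ?_, ?_⟩
  · calc a 1 = ∑ ℓ ∈ Icc 1 N, (μ ℓ : ℂ) * ∑ d ∈ Icc 1 N with ℓ ∣ d, a d / d := by
          rw [sum_moebius_mul_sum_filter_dvd hN]; simp
      _ = ∑ ℓ ∈ Icc 1 N, (((μ ℓ : ℝ) ^ 2 / φ ℓ / G : ℝ) : ℂ) :=
          sum_congr rfl fun ℓ hℓ => by rw [ha ℓ hℓ]; push_cast; ring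
      _ = 1 := by rw [← Complex.ofReal_sum, ← sum_div, div_self hG.ne', Complex.ofReal_one]
  · calc (mollifierForm N a).re = ∑ ℓ ∈ Icc 1 N, (μ ℓ : ℝ) ^ 2 / φ ℓ / G ^ 2 := by
          rw [re_mollifierForm]
          refine sum_congr rfl fun ℓ hℓ => ?_
          have : (φ ℓ : ℝ) ≠ 0 := Nat.cast_ne_zero.2 (Nat.totient_pos.2 (mem_Icc.1 hℓ).1).ne'
          rw [ha ℓ hℓ, norm_div, norm_mul, Complex.norm_intCast, Complex.norm_natCast,
            Complex.norm_real, Real.norm_of_nonneg hG.le, div_pow, sq_abs]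
          field_simp
      _ = 1 / G := by rw [← sum_div, ← hG_def]; field_simp

/-- the mollifier quadratic form is at least `1/G`,
with `G = ∑_{n ≤ N} μ(n)²/φ(n)`, and this bound is attained. -/
theorem quadratic_form_min (N : ℕ) (hN : 1 ≤ N) :
    (∀ a : ℕ → ℂ, a 1 = 1 →
      1 / (∑ n ∈ Finset.Icc 1 N, (ArithmeticFunction.moebius n : ℝ) ^ 2 / Nat.totient n) ≤
        (∑ d ∈ Finset.Icc 1 N, ∑ e ∈ Finset.Icc 1 N,
          a d * (starRingEnd ℂ) (a e) / (Nat.lcm d e : ℂ)).re) ∧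
    ∃ a : ℕ → ℂ, a 1 = 1 ∧
      (∑ d ∈ Finset.Icc 1 N, ∑ e ∈ Finset.Icc 1 N,
          a d * (starRingEnd ℂ) (a e) / (Nat.lcm d e : ℂ)).re =
        1 / (∑ n ∈ Finset.Icc 1 N, (ArithmeticFunction.moebius n : ℝ) ^ 2 / Nat.totient n) :=
  ⟨fun _ ha => one_div_le_re_mollifierForm hN ha, exists_re_mollifierForm_eq hN⟩
end

section
/- There exists a constant C > 0 such that for all N \ge 3 and all positive integers m \le N, \sum_{p^{\alpha} \ell = m, \alpha \ge 1} (\log p / p^{\alpha}) \cdot \varphi(\ell)/\ell^2 = (\varphi(m)/m^2) \log m + E(m) with |E(m)| \le C (\varphi(m)/m^2) \log\log(m+2), where the sum runs over all factorizations m = p^{\alpha} \ell with p prime, \alpha \ge 1, and \gcd(p, \ell) arbitrary (i.e., p^{\alpha} exactly the contribution of one prime power factor). -/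
/-!
Write `m = p ^ α * ℓ` and `v = m.factorization p`. The summand equals
`log p * p ^ α * φ ℓ / m ^ 2`, and `p ^ α * φ ℓ` is `φ m` while `p` still divides `ℓ` (`α < v`),
but `φ m * p / (p - 1)` at `α = v`. Summing over `α` and `p`, the sum is exactly
`φ m / m ^ 2 * (log m + ∑ p ∣ m, log p / (p - 1))`, so it remains to bound the prime-factor sum
by `O(log log m)`. It is at most `2 * ∑ p ∣ m, log p / p`. Prime factors `p ≤ T ≈ log m`
contribute at most `log T + log 4` by Mertens' estimate (Legendre's formula `⌊n/p⌋ ≤ v_p(n!)`,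
`log n! ≤ n log n` and Chebyshev's bound `θ(n) ≤ n log 4`), while the larger ones contribute at
most `(∑ p ∣ m, log p) / T ≤ log m / T ≤ 1`.
-/

open Finset Real
open scoped Nat

lemma Nat.div_le_factorization_factorial {p : ℕ} (hp : p.Prime) (n : ℕ) :
    n / p ≤ n.factorial.factorization p := by
  rw [Nat.factorization_factorial hp (b := Nat.log p n + 2) (by omega)]
  simpa using Finset.single_le_sum (f := fun i => n / p ^ i) (fun _ _ => Nat.zero_le _)
    (show 1 ∈ Ico 1 (Nat.log p n + 2) by simp)

lemma log_factorial_eq_sum_primesLE (n : ℕ) :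
    log n.factorial = ∑ p ∈ Nat.primesLE n, n.factorial.factorization p * log p := by
  rw [log_nat_eq_sum_factorization, Finsupp.sum_of_support_subset _ _ _ (by simp)]
  intro p hp
  rw [Nat.support_factorization, Nat.mem_primeFactors] at hp
  exact Nat.mem_primesLE.2 ⟨(hp.1.dvd_factorial).1 hp.2.1, hp.1⟩

theorem sum_primesLE_log_div_le (n : ℕ) :
    ∑ p ∈ Nat.primesLE n, log p / p ≤ log n + log 4 := by
  rcases Nat.eq_zero_or_pos n with rfl | hn
  · simpa [Nat.primesLE] using log_nonneg (by norm_num : (1 : ℝ) ≤ 4)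
  have hn' : (0 : ℝ) < n := by exact_mod_cast hn
  have hlegendre : ∑ p ∈ Nat.primesLE n, ((n / p : ℕ) : ℝ) * log p ≤ n * log n := calc
    _ ≤ ∑ p ∈ Nat.primesLE n, n.factorial.factorization p * log p := by
      gcongr with p hp
      exact Nat.div_le_factorization_factorial (Nat.mem_primesLE.1 hp).2 n
    _ = log n.factorial := (log_factorial_eq_sum_primesLE n).symm
    _ ≤ log ((n ^ n : ℕ) : ℝ) :=
      log_le_log (by positivity) (by exact_mod_cast n.factorial_le_pow)
    _ = n * log n := by push_cast; rw [log_pow]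
  have hfloor : ∀ p ∈ Nat.primesLE n,
      (n : ℝ) * (log p / p) ≤ ((n / p : ℕ) : ℝ) * log p + log p := by
    intro p hp
    have hp := (Nat.mem_primesLE.1 hp).2
    have : (n : ℝ) / p - 1 ≤ ((n / p : ℕ) : ℝ) := by
      rw [← Nat.floor_div_eq_div (K := ℝ)]; exact (Nat.sub_one_lt_floor _).le
    have hl : 0 ≤ log p := log_nonneg (by exact_mod_cast hp.one_lt.le)
    calc (n : ℝ) * (log p / p) = ((n : ℝ) / p - 1) * log p + log p := by ring
      _ ≤ _ := by gcongr
  have htheta := Chebyshev.theta_le_log4_mul_x (Nat.cast_nonneg n)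
  rw [Chebyshev.theta_eq_sum_primesLE_log] at htheta
  have := sum_le_sum hfloor
  rw [← mul_sum, sum_add_distrib] at this
  rw [← mul_le_mul_iff_of_pos_left hn']
  linarith

lemma sum_primeFactors_log_le_log (m : ℕ) : ∑ p ∈ m.primeFactors, log p ≤ log m := by
  rw [log_nat_eq_sum_factorization, Finsupp.sum, Nat.support_factorization]
  gcongr with p hp
  obtain ⟨hp, hpm, hm⟩ := Nat.mem_primeFactors.1 hp
  have : (1 : ℝ) ≤ m.factorization p := by exact_mod_cast hp.factorization_pos_of_dvd hm hpm
  exact le_mul_of_one_le_left (log_natCast_nonneg p) this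

theorem sum_primeFactors_log_div_le (m : ℕ) :
    ∑ p ∈ m.primeFactors, log p / p ≤ log (log m + 1) + log 4 + 1 := by
  set T := ⌊log m⌋₊ + 1
  have hlogm : 0 ≤ log m := Real.log_natCast_nonneg m
  have hT : log m < T := by push_cast [T]; exact Nat.lt_floor_add_one _
  have hT' : (T : ℝ) ≤ log m + 1 := by push_cast [T]; linarith [Nat.floor_le hlogm]
  rw [← sum_filter_add_sum_filter_not m.primeFactors (· ≤ T)]
  have hsmall : ∑ p ∈ m.primeFactors with p ≤ T, log p / p ≤ log (log m + 1) + log 4 := calc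
    _ ≤ ∑ p ∈ Nat.primesLE T, log p / p := by
      refine sum_le_sum_of_subset_of_nonneg ?_ fun p _ _ => by positivity
      intro p hp
      rw [mem_filter] at hp
      exact Nat.mem_primesLE.2 ⟨hp.2, Nat.prime_of_mem_primeFactors hp.1⟩
    _ ≤ log T + log 4 := sum_primesLE_log_div_le T
    _ ≤ _ := by gcongr
  have hlarge : ∑ p ∈ m.primeFactors with ¬p ≤ T, log p / p ≤ 1 := calc
    _ ≤ ∑ p ∈ m.primeFactors with ¬p ≤ T, log p / T := by
      gcongr with p hp
      exact_mod_cast (not_le.1 (mem_filter.1 hp).2).le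
    _ ≤ ∑ p ∈ m.primeFactors, log p / T := by
      rw [← sum_div, ← sum_div]
      gcongr
      exact filter_subset _ _
    _ ≤ log m / T := by rw [← sum_div]; gcongr; exact sum_primeFactors_log_le_log m
    _ ≤ 1 := by rw [div_le_one (by linarith)]; exact hT.le
  linarith

lemma Nat.totient_prime_pow_mul_of_dvd {p n : ℕ} (hp : p.Prime) (h : p ∣ n) (k : ℕ) :
    φ (p ^ k * n) = p ^ k * φ n := by
  induction k with
  | zero => simp
  | succ k ih =>
    rw [pow_succ', mul_assoc, Nat.totient_mul_of_prime_of_dvd hp (dvd_mul_of_dvd_right h _), ih,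
      mul_assoc]

lemma Nat.totient_eq_prime_pow_mul_totient_div {p m α : ℕ} (hp : p.Prime)
    (h : p ^ (α + 1) ∣ m) :
    φ m = p ^ α * φ (m / p ^ α) := by
  obtain ⟨ℓ, rfl⟩ := h
  rw [pow_succ, mul_assoc, Nat.mul_div_cancel_left _ (pow_pos hp.pos α),
    Nat.totient_prime_pow_mul_of_dvd hp (dvd_mul_right p ℓ)]

lemma Nat.prime_mul_totient_eq_ordProj_mul_totient_ordCompl {p m : ℕ} (hp : p.Prime) (hpm : p ∣ m)
    (hm : m ≠ 0) :
    p * φ m = ordProj[p] m * (p - 1) * φ (ordCompl[p] m) := by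
  have hv : 0 < m.factorization p := hp.factorization_pos_of_dvd hm hpm
  conv_lhs => rw [← Nat.ordProj_mul_ordCompl_eq_self m p]
  rw [Nat.totient_mul ((Nat.coprime_ordCompl hp hm).pow_left _), Nat.totient_prime_pow hp hv,
    ← mul_assoc, ← mul_assoc, ← pow_succ', Nat.sub_one, Nat.succ_pred_eq_of_pos hv]

noncomputable def primePowerTerm (m p α : ℕ) : ℝ :=
  log p / (p : ℝ) ^ α * ((φ (m / p ^ α) : ℝ) / ((m / p ^ α : ℕ) : ℝ) ^ 2)

lemma primePowerTerm_eq {p m α : ℕ} (hp : p.Prime) (hm : m ≠ 0) (h : p ^ α ∣ m) :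
    primePowerTerm m p α = log p * ((p : ℝ) ^ α * φ (m / p ^ α)) / (m : ℝ) ^ 2 := by
  obtain ⟨ℓ, rfl⟩ := h
  unfold primePowerTerm
  have hℓ : ℓ ≠ 0 := right_ne_zero_of_mul hm
  have hpα : p ^ α ≠ 0 := pow_ne_zero _ hp.ne_zero
  rw [Nat.mul_div_cancel_left _ (Nat.pos_of_ne_zero hpα)]
  push_cast
  field_simp

theorem sum_Icc_primePowerTerm_eq {p m : ℕ} (hp : p.Prime) (hpm : p ∣ m) (hm : m ≠ 0) :
    ∑ α ∈ Icc 1 m, (if p ^ α ∣ m then primePowerTerm m p α else 0) =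
      φ m / (m : ℝ) ^ 2 * (m.factorization p * log p + log p / (p - 1)) := by
  have hdvd : ∀ α, p ^ α ∣ m ↔ α ≤ m.factorization p := fun _ =>
    hp.pow_dvd_iff_le_factorization hm
  have hIcc : {α ∈ Icc 1 m | p ^ α ∣ m} = Icc 1 (m.factorization p) := by
    ext α
    simp only [mem_filter, mem_Icc, hdvd]
    constructor
    · exact fun h => ⟨h.1.1, h.2⟩
    · exact fun h => ⟨⟨h.1, h.2.trans (Nat.factorization_lt p hm).le⟩, h.2⟩
  obtain ⟨k, hk⟩ : ∃ k, m.factorization p = k + 1 :=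
    Nat.exists_eq_add_one.2 (hp.factorization_pos_of_dvd hm hpm)
  have hlower : ∀ α ∈ Icc 1 k, primePowerTerm m p α = φ m / (m : ℝ) ^ 2 * log p := by
    intro α hα
    have h : p ^ (α + 1) ∣ m := (hdvd _).2 (by rw [hk]; simp at hα; omega)
    rw [primePowerTerm_eq hp hm ((pow_dvd_pow p α.le_succ).trans h),
      Nat.totient_eq_prime_pow_mul_totient_div hp h]
    push_cast
    ring
  have htop : (p : ℝ) * φ m = (p : ℝ) ^ (k + 1) * (p - 1) * φ (m / p ^ (k + 1)) := by
    have h := congrArg (Nat.cast : ℕ → ℝ)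
      (Nat.prime_mul_totient_eq_ordProj_mul_totient_ordCompl hp hpm hm)
    push_cast [Nat.cast_sub hp.one_le, hk] at h
    exact h
  rw [← sum_filter, hIcc, hk, sum_Icc_succ_top (by omega), sum_congr rfl hlower, sum_const,
    Nat.card_Icc, Nat.add_sub_cancel, primePowerTerm_eq hp hm ((hdvd _).2 hk.ge), nsmul_eq_mul]
  have hp0 : (p : ℝ) - 1 ≠ 0 := sub_ne_zero.2 (by exact_mod_cast hp.one_lt.ne')
  field_simp
  push_cast
  linear_combination (-log p) * htop

theorem sum_primes_sum_Icc_primePowerTerm_eq {m : ℕ} (hm : m ≠ 0) :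
    ∑ p ∈ (range (m + 1)).filter Nat.Prime,
        ∑ α ∈ Icc 1 m, (if p ^ α ∣ m then primePowerTerm m p α else 0) =
      φ m / (m : ℝ) ^ 2 * (log m + ∑ p ∈ m.primeFactors, log p / (p - 1)) := by
  have hsub : m.primeFactors ⊆ (range (m + 1)).filter Nat.Prime := fun p hp =>
    mem_filter.2 ⟨mem_range_succ_iff.2 (Nat.le_of_mem_primeFactors hp),
      Nat.prime_of_mem_primeFactors hp⟩
  have hzero : ∀ p ∈ (range (m + 1)).filter Nat.Prime, p ∉ m.primeFactors →
      ∑ α ∈ Icc 1 m, (if p ^ α ∣ m then primePowerTerm m p α else 0) = 0 := by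
    intro p hp hpm
    refine sum_eq_zero fun α hα => if_neg fun h => hpm ?_
    exact Nat.mem_primeFactors.2 ⟨(mem_filter.1 hp).2,
      (dvd_pow_self p (by simp at hα; omega)).trans h, hm⟩
  rw [← sum_subset hsub hzero, sum_congr rfl fun p hp => sum_Icc_primePowerTerm_eq
    (Nat.prime_of_mem_primeFactors hp) (Nat.dvd_of_mem_primeFactors hp) hm, ← mul_sum,
    sum_add_distrib, log_nat_eq_sum_factorization, Finsupp.sum, Nat.support_factorization]

lemma sum_primeFactors_log_div_sub_one_le (m : ℕ) :
    ∑ p ∈ m.primeFactors, log p / (p - 1) ≤ 2 * ∑ p ∈ m.primeFactors, log p / p := by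
  rw [mul_sum]
  gcongr with p hp
  have hp2 : (2 : ℝ) ≤ p := by exact_mod_cast (Nat.prime_of_mem_primeFactors hp).two_le
  rw [div_le_iff₀ (by linarith), mul_div_assoc', div_mul_eq_mul_div, le_div_iff₀ (by linarith)]
  nlinarith [log_natCast_nonneg p]

theorem exists_sum_primeFactors_log_div_sub_one_le_mul_log_log :
    ∃ C > 0, ∀ m : ℕ, 0 < m →
      ∑ p ∈ m.primeFactors, log p / (p - 1) ≤ C * log (log (m + 2)) := by
  have hlog3 : 1 < log 3 := by
    rw [lt_log_iff_exp_lt (by norm_num)]; linarith [exp_one_lt_d9]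
  set K := 2 * (log 2 + log 4 + 1)
  have hK : 0 < K := by positivity
  have hL₀ : 0 < log (log 3) := log_pos hlog3
  refine ⟨K / log (log 3) + 2, by positivity, fun m hm => ?_⟩
  have hm' : (1 : ℝ) ≤ m := by exact_mod_cast hm
  have hlog3m : log 3 ≤ log (m + 2) := log_le_log (by norm_num) (by linarith)
  have hlogm : log m + 1 ≤ 2 * log (m + 2) := by
    linarith [log_le_log (by linarith) (by linarith : (m : ℝ) ≤ m + 2)]
  have hL : log (log 3) ≤ log (log (m + 2)) := log_le_log (by linarith) hlog3m
  have hloglog : log (log m + 1) ≤ log 2 + log (log (m + 2)) := by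
    rw [← log_mul two_ne_zero (by linarith)]
    exact log_le_log (by linarith [log_natCast_nonneg m]) hlogm
  calc ∑ p ∈ m.primeFactors, log p / (p - 1)
      ≤ 2 * (log (log m + 1) + log 4 + 1) :=
        (sum_primeFactors_log_div_sub_one_le m).trans
          (by gcongr; exact sum_primeFactors_log_div_le m)
    _ ≤ K + 2 * log (log (m + 2)) := by linarith
    _ ≤ K / log (log 3) * log (log (m + 2)) + 2 * log (log (m + 2)) := by
        gcongr
        rw [div_mul_eq_mul_div, le_div_iff₀ hL₀]
        exact mul_le_mul_of_nonneg_left hL hK.le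
    _ = _ := by ring

/-- `∑_{p^α ℓ = m, α ≥ 1} (log p / p^α) φ(ℓ)/ℓ² = (φ(m)/m²) log m
+ O((φ(m)/m²) log log (m+2))`, uniformly for `m ≤ N`. -/
theorem prime_power_factorization_sum :
    ∃ C : ℝ, 0 < C ∧ ∀ N : ℕ, 3 ≤ N → ∀ m : ℕ, 0 < m → m ≤ N →
      |(∑ p ∈ (Finset.range (m + 1)).filter Nat.Prime, ∑ α ∈ Finset.Icc 1 m,
          (if p ^ α ∣ m then
            Real.log p / (p : ℝ) ^ α *
              ((Nat.totient (m / p ^ α) : ℝ) / ((m / p ^ α : ℕ) : ℝ) ^ 2)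
          else 0)) -
        (Nat.totient m : ℝ) / (m : ℝ) ^ 2 * Real.log m| ≤
      C * ((Nat.totient m : ℝ) / (m : ℝ) ^ 2) * Real.log (Real.log (m + 2)) := by
  obtain ⟨C, hC, hR⟩ := exists_sum_primeFactors_log_div_sub_one_le_mul_log_log
  refine ⟨C, hC, fun N _ m hm _ => ?_⟩
  have hφ : 0 ≤ (φ m : ℝ) / (m : ℝ) ^ 2 := by positivity
  have hR₀ : 0 ≤ ∑ p ∈ m.primeFactors, log p / (p - 1) := sum_nonneg fun p hp =>
    div_nonneg (log_natCast_nonneg p)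
      (sub_nonneg.2 (by exact_mod_cast (Nat.prime_of_mem_primeFactors hp).one_le))
  have hsum := sum_primes_sum_Icc_primePowerTerm_eq hm.ne'
  unfold primePowerTerm at hsum
  rw [hsum, mul_add, add_sub_cancel_left,
    abs_of_nonneg (mul_nonneg hφ hR₀), mul_comm C, mul_assoc]
  exact mul_le_mul_of_nonneg_left (hR m hm) hφ
end

section
/- As N \to \infty, G := \sum_{n \le N} \mu(n)^2/\varphi(n) = \log N + O(1); in particular G \sim \log N. -/
/-!
Write `μ²/φ = h * (1/n)` (Dirichlet convolution) with `h = (μ²/φ) * (μ/n)`, using that `μ/n`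
inverts `1/n`. Then `h` is multiplicative, supported on cube-free numbers, and
`h(p) = -h(p²) = 1/(p(p-1))`; hence `∑ h(d) d^{1/4}` converges and the Euler product gives
`∑ h(d) = 1`. Swapping the order of summation, `G(N) = ∑_{d ≤ N} h(d) H(N/d)` with `H` the
harmonic numbers, and `H(N/d) = log N + O(1 + log d)`. Since `log d ≪ d^{1/4}`, the error terms
sum to `O(1)`, and so does the tail `(∑_{d > N} h(d)) log N`.
-/

open Finset ArithmeticFunction Filter

namespace ArithmeticFunction

noncomputable def invId : ArithmeticFunction ℝ := ⟨fun n => (n : ℝ)⁻¹, by simp⟩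

@[simp] theorem invId_apply (n : ℕ) : invId n = (n : ℝ)⁻¹ := rfl

theorem invId_mul (m n : ℕ) : invId (m * n) = invId m * invId n := by
  simp [mul_comm]

theorem pmul_mul_pmul_of_map_mul {R : Type*} [CommSemiring R] {c : ArithmeticFunction R}
    (hc : ∀ m n, c (m * n) = c m * c n) (f g : ArithmeticFunction R) :
    f.pmul c * g.pmul c = (f * g).pmul c := by
  ext n
  simp only [mul_apply, pmul_apply, sum_mul]
  refine sum_congr rfl fun x hx => ?_
  rw [← (Nat.mem_divisorsAntidiagonal.mp hx).1, hc]
  ring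

theorem one_pmul_of_map_one {R : Type*} [CommSemiring R] {c : ArithmeticFunction R}
    (hc : c 1 = 1) : (1 : ArithmeticFunction R).pmul c = 1 := by
  ext n
  rw [pmul_apply, one_apply]
  split_ifs with h <;> simp [h, hc]

theorem moebius_pmul_invId_mul_invId :
    (moebius : ArithmeticFunction ℝ).pmul invId * invId = 1 := by
  calc _ = (moebius : ArithmeticFunction ℝ).pmul invId *
        (zeta : ArithmeticFunction ℝ).pmul invId := by rw [zeta_pmul]
    _ = 1 := by
      rw [pmul_mul_pmul_of_map_mul invId_mul, coe_moebius_mul_coe_zeta,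
        one_pmul_of_map_one (by simp)]

theorem mul_apply_prime_pow {R : Type*} [Semiring R] (f g : ArithmeticFunction R) {p : ℕ}
    (hp : p.Prime) (k : ℕ) :
    (f * g) (p ^ k) = ∑ i ∈ range (k + 1), f (p ^ i) * g (p ^ (k - i)) := by
  rw [mul_apply, Nat.sum_divisorsAntidiagonal (fun x y => f x * g y), Nat.divisors_prime_pow hp,
    sum_map]
  refine sum_congr rfl fun i hi => ?_
  rw [Function.Embedding.coeFn_mk, Nat.pow_div (Nat.lt_succ_iff.mp (mem_range.mp hi)) hp.pos]

theorem sum_Icc_mul_invId (h : ArithmeticFunction ℝ) (N : ℕ) :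
    ∑ n ∈ Icc 1 N, (h * invId) n = ∑ d ∈ Icc 1 N, h d * harmonic (N / d) := by
  have hIcc (M : ℕ) : Icc 1 M = Ioc 0 M := Icc_add_one_left_eq_Ioc 0 M
  simp only [harmonic_eq_sum_Icc, hIcc, sum_Ioc_mul_eq_sum_sum]
  push_cast
  rfl

end ArithmeticFunction

theorem abs_harmonic_div_sub_log_le {d : ℕ} (hd : 0 < d) (N : ℕ) :
    |(harmonic (N / d) : ℝ) - Real.log N| ≤ 1 + Real.log d := by
  have hlogd : 0 ≤ Real.log d := Real.log_natCast_nonneg d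
  rcases Nat.eq_zero_or_pos N with rfl | hN
  · simpa using hlogd.trans (le_add_of_nonneg_left zero_le_one)
  set M := N / d
  have hupper : (harmonic M : ℝ) ≤ 1 + Real.log N := by
    refine (harmonic_le_one_add_log M).trans (add_le_add_right ?_ 1)
    rcases Nat.eq_zero_or_pos M with hM | hM
    · simp [hM, Real.log_natCast_nonneg]
    · exact Real.log_le_log (by exact_mod_cast hM) (by exact_mod_cast Nat.div_le_self N d)
  have hlower : Real.log N - Real.log d ≤ harmonic M := by
    have hNd : (N : ℝ) / d ≤ M + 1 := by
      rw [div_le_iff₀ (by exact_mod_cast hd)]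
      exact_mod_cast (Nat.lt_div_mul_add (a := N) hd).le.trans_eq (by ring)
    calc Real.log N - Real.log d = Real.log (N / d) :=
          (Real.log_div (by positivity) (by positivity)).symm
      _ ≤ Real.log (M + 1) := Real.log_le_log (by positivity) hNd
      _ ≤ harmonic M := by exact_mod_cast log_add_one_le_harmonic M
  rw [abs_le]
  constructor <;> linarith

section RpowWeighted

variable (h : ArithmeticFunction ℝ) {σ : ℝ}

theorem abs_le_rpow_mul_abs (hσ : 0 ≤ σ) (d : ℕ) : |h d| ≤ (d : ℝ) ^ σ * |h d| := by
  rcases Nat.eq_zero_or_pos d with rfl | hd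
  · simp
  · exact le_mul_of_one_le_left (abs_nonneg _) (Real.one_le_rpow (by exact_mod_cast hd) hσ)

theorem sum_Icc_one_eq_sum_range (N : ℕ) : ∑ d ∈ Icc 1 N, h d = ∑ d ∈ range (N + 1), h d := by
  refine sum_subset (fun d hd => mem_range.mpr (Nat.lt_succ_of_le (mem_Icc.mp hd).2))
    fun d hd hd' => ?_
  obtain rfl : d = 0 := by simp only [mem_range, mem_Icc, not_and, not_le] at hd hd'; omega
  exact h.map_zero

theorem abs_tsum_sub_sum_Icc_mul_rpow_le (hσ : 0 ≤ σ)
    (hs : Summable fun d : ℕ => (d : ℝ) ^ σ * |h d|) (N : ℕ) :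
    |∑' d, h d - ∑ d ∈ Icc 1 N, h d| * (N : ℝ) ^ σ ≤ ∑' d : ℕ, (d : ℝ) ^ σ * |h d| := by
  have hsum : Summable fun d => ‖h d‖ :=
    hs.of_nonneg_of_le (fun _ => norm_nonneg _) (abs_le_rpow_mul_abs h hσ)
  have htail : ∑' d, h d - ∑ d ∈ Icc 1 N, h d = ∑' i, h (i + (N + 1)) := by
    rw [sum_Icc_one_eq_sum_range, ← hsum.of_norm.sum_add_tsum_nat_add (N + 1),
      add_sub_cancel_left]
  have hshift : Summable fun i => ‖h (i + (N + 1))‖ :=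
    hsum.comp_injective (add_left_injective (N + 1))
  calc |∑' d, h d - ∑ d ∈ Icc 1 N, h d| * (N : ℝ) ^ σ
      ≤ ∑' i, |h (i + (N + 1))| * (N : ℝ) ^ σ := by
        rw [htail, tsum_mul_right]
        gcongr
        simpa only [Real.norm_eq_abs] using norm_tsum_le_tsum_norm hshift
    _ ≤ ∑' i, ((i + (N + 1) : ℕ) : ℝ) ^ σ * |h (i + (N + 1))| := by
        refine Summable.tsum_le_tsum (fun i => ?_) (hshift.mul_right _)
          (hs.comp_injective (add_left_injective (N + 1)))
        rw [mul_comm]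
        gcongr
        linarith
    _ ≤ ∑' d : ℕ, (d : ℝ) ^ σ * |h d| := by
        rw [← hs.sum_add_tsum_nat_add (N + 1)]
        exact le_add_of_nonneg_left (sum_nonneg fun d _ => by positivity)

theorem abs_sum_Icc_mul_invId_sub_log_le (hσ : 0 < σ)
    (hs : Summable fun d : ℕ => (d : ℝ) ^ σ * |h d|) (N : ℕ) :
    |∑ n ∈ Icc 1 N, (h * invId) n - (∑' d, h d) * Real.log N| ≤
      (1 + 2 / σ) * ∑' d : ℕ, (d : ℝ) ^ σ * |h d| := by
  set K := ∑' d : ℕ, (d : ℝ) ^ σ * |h d|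
  have hsplit : ∑ n ∈ Icc 1 N, (h * invId) n - (∑' d, h d) * Real.log N =
      ∑ d ∈ Icc 1 N, h d * (harmonic (N / d) - Real.log N) -
        (∑' d, h d - ∑ d ∈ Icc 1 N, h d) * Real.log N := by
    simp only [sum_Icc_mul_invId, mul_sub, sum_sub_distrib, sub_mul, sum_mul]
    ring
  have hterm (d : ℕ) (hd : d ∈ Icc 1 N) :
      |h d * (harmonic (N / d) - Real.log N)| ≤ (1 + 1 / σ) * ((d : ℝ) ^ σ * |h d|) := by
    have hd : 0 < d := (mem_Icc.mp hd).1
    have hone : 1 ≤ (d : ℝ) ^ σ := Real.one_le_rpow (by exact_mod_cast hd) hσ.le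
    have hlog : Real.log d ≤ (d : ℝ) ^ σ / σ := Real.log_le_rpow_div d.cast_nonneg hσ
    rw [abs_mul, mul_comm]
    calc |(harmonic (N / d) : ℝ) - Real.log N| * |h d| ≤ (1 + Real.log d) * |h d| := by
          gcongr; exact abs_harmonic_div_sub_log_le hd N
      _ ≤ ((d : ℝ) ^ σ + (d : ℝ) ^ σ / σ) * |h d| := by gcongr
      _ = (1 + 1 / σ) * ((d : ℝ) ^ σ * |h d|) := by ring
  have hmain : |∑ d ∈ Icc 1 N, h d * (harmonic (N / d) - Real.log N)| ≤ (1 + 1 / σ) * K :=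
    calc _ ≤ ∑ d ∈ Icc 1 N, (1 + 1 / σ) * ((d : ℝ) ^ σ * |h d|) :=
          (abs_sum_le_sum_abs _ _).trans (sum_le_sum hterm)
      _ ≤ (1 + 1 / σ) * K := by
          rw [← mul_sum]
          gcongr
          exact hs.sum_le_tsum _ fun d _ => by positivity
  have htail : |∑' d, h d - ∑ d ∈ Icc 1 N, h d| * Real.log N ≤ K / σ :=
    calc _ ≤ |∑' d, h d - ∑ d ∈ Icc 1 N, h d| * ((N : ℝ) ^ σ / σ) := by
          gcongr; exact Real.log_le_rpow_div N.cast_nonneg hσ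
      _ ≤ K / σ := by
          rw [← mul_div_assoc]
          gcongr
          exact abs_tsum_sub_sum_Icc_mul_rpow_le h hσ.le hs N
  rw [hsplit]
  calc _ ≤ |∑ d ∈ Icc 1 N, h d * (harmonic (N / d) - Real.log N)| +
        |∑' d, h d - ∑ d ∈ Icc 1 N, h d| * Real.log N := by
        refine (abs_sub _ _).trans_eq ?_
        rw [abs_mul, abs_of_nonneg (Real.log_natCast_nonneg N)]
    _ ≤ (1 + 1 / σ) * K + K / σ := add_le_add hmain htail
    _ = (1 + 2 / σ) * K := by ring

end RpowWeighted

theorem summable_of_tsum_prime_pow_le_one_add {f c : ℕ → ℝ} (hf₀ : f 0 = 0) (hf₁ : f 1 = 1)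
    (hmul : ∀ {m n : ℕ}, m.Coprime n → f (m * n) = f m * f n) (hf : ∀ n, 0 ≤ f n)
    (hc : Summable c) (hc₀ : ∀ n, 0 ≤ c n)
    (hloc : ∀ {p : ℕ}, p.Prime → Summable fun e => f (p ^ e))
    (hle : ∀ {p : ℕ}, p.Prime → ∑' e, f (p ^ e) ≤ 1 + c p) :
    Summable f := by
  refine summable_of_sum_range_le hf (c := Real.exp (∑' n, c n)) fun N => ?_
  have hnorm {p : ℕ} (hp : p.Prime) : Summable fun e => ‖f (p ^ e)‖ := by
    simpa only [Real.norm_eq_abs, abs_of_nonneg (hf _)] using hloc hp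
  have hprod := hasSum_subtype_iff_indicator.mp
    (EulerProduct.summable_and_hasSum_smoothNumbers_prod_primesBelow_tsum hf₁ hmul hnorm N).2
  calc ∑ n ∈ range N, f n = ∑ n ∈ range N, N.smoothNumbers.indicator f n := by
        refine sum_congr rfl fun n hn => ?_
        rcases Nat.eq_zero_or_pos n with rfl | hn₀
        · simp [hf₀, Set.indicator_apply]
        · exact (Set.indicator_of_mem (Nat.mem_smoothNumbers_of_lt hn₀ (mem_range.mp hn)) f).symm
    _ ≤ ∏ p ∈ N.primesBelow, ∑' e, f (p ^ e) :=
        sum_le_hasSum _ (fun n _ => Set.indicator_nonneg (fun n _ => hf n) n) hprod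
    _ ≤ ∏ p ∈ N.primesBelow, (1 + c p) :=
        prod_le_prod (fun p _ => tsum_nonneg fun e => hf _)
          fun p hp => hle (Nat.prime_of_mem_primesBelow hp)
    _ ≤ Real.exp (∑ p ∈ N.primesBelow, c p) := Real.prod_one_add_le_exp_sum _ hc₀
    _ ≤ Real.exp (∑' n, c n) := Real.exp_le_exp.mpr (hc.sum_le_tsum _ fun n _ => hc₀ n)

theorem hasSum_of_forall_three_le_eq_zero {f : ℕ → ℝ} (hf : ∀ e, 3 ≤ e → f e = 0) :
    HasSum f (f 0 + f 1 + f 2) := by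
  simpa [sum_range_succ] using
    hasSum_sum_of_ne_finset_zero (s := range 3) fun e he => hf e (by simpa using he)

theorem rpow_quarter_add_mul_inv_le {p : ℝ} (hp : 2 ≤ p) :
    (p ^ (1 / 4 : ℝ) + (p ^ 2) ^ (1 / 4 : ℝ)) * (p * (p - 1))⁻¹ ≤ 4 * p ^ (-(3 / 2) : ℝ) := by
  have hp0 : 0 ≤ p := by linarith
  set x := p ^ (1 / 4 : ℝ) with hx
  have hx1 : 1 ≤ x := Real.one_le_rpow (by linarith) (by norm_num)
  have hx4 : p = x ^ 4 := by
    rw [hx, ← Real.rpow_mul_natCast hp0]; norm_num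
  have hsq : (p ^ 2) ^ (1 / 4 : ℝ) = x ^ 2 := by
    rw [hx, Real.rpow_pow_comm hp0]
  have hneg : p ^ (-(3 / 2) : ℝ) = (x ^ 6)⁻¹ := by
    rw [hx, ← Real.rpow_mul_natCast hp0, ← Real.rpow_neg hp0]; norm_num
  rw [hsq, hneg, hx4]
  rw [hx4] at hp
  rw [← div_eq_mul_inv, ← div_eq_mul_inv, div_le_div_iff₀ (by nlinarith) (by positivity)]
  have hcube : x ^ 3 ≤ x ^ 4 := pow_le_pow_right₀ hx1 (by norm_num)
  calc (x + x ^ 2) * x ^ 6 = (x ^ 3 + x ^ 4) * x ^ 4 := by ring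
    _ ≤ 4 * (x ^ 4 - 1) * x ^ 4 := by gcongr; linarith
    _ = 4 * (x ^ 4 * (x ^ 4 - 1)) := by ring

namespace ArithmeticFunction

noncomputable def sqfreeInvTotient : ArithmeticFunction ℝ :=
  ⟨fun n => (moebius n : ℝ) ^ 2 / n.totient, by simp⟩

theorem sqfreeInvTotient_apply (n : ℕ) :
    sqfreeInvTotient n = (moebius n : ℝ) ^ 2 / n.totient := rfl

theorem isMultiplicative_sqfreeInvTotient : sqfreeInvTotient.IsMultiplicative := by
  refine ⟨by simp [sqfreeInvTotient_apply], fun {m n} hmn => ?_⟩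
  simp only [sqfreeInvTotient_apply, isMultiplicative_moebius.map_mul_of_coprime hmn,
    Nat.totient_mul hmn]
  push_cast
  ring

theorem sqfreeInvTotient_apply_prime_pow {p : ℕ} (hp : p.Prime) (k : ℕ) :
    sqfreeInvTotient (p ^ k) = if k = 0 then 1 else if k = 1 then ((p : ℝ) - 1)⁻¹ else 0 := by
  rcases eq_or_ne k 0 with rfl | hk
  · simp [sqfreeInvTotient_apply]
  rw [sqfreeInvTotient_apply, moebius_apply_prime_pow hp hk, if_neg hk]
  split_ifs with hk1
  · rw [hk1, pow_one, Nat.totient_prime hp, Nat.cast_sub hp.one_le]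
    simp
  · simp

theorem moebius_pmul_invId_apply_prime_pow {p : ℕ} (hp : p.Prime) (k : ℕ) :
    (moebius : ArithmeticFunction ℝ).pmul invId (p ^ k) =
      if k = 0 then 1 else if k = 1 then -(p : ℝ)⁻¹ else 0 := by
  rcases eq_or_ne k 0 with rfl | hk
  · simp
  rw [pmul_apply, intCoe_apply, moebius_apply_prime_pow hp hk, if_neg hk]
  split_ifs with hk1 <;> simp [hk1]

noncomputable def sqfreeInvTotientCorr : ArithmeticFunction ℝ :=
  sqfreeInvTotient * (moebius : ArithmeticFunction ℝ).pmul invId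

theorem sqfreeInvTotientCorr_mul_invId : sqfreeInvTotientCorr * invId = sqfreeInvTotient := by
  rw [sqfreeInvTotientCorr, mul_assoc, moebius_pmul_invId_mul_invId, mul_one]

theorem isMultiplicative_sqfreeInvTotientCorr : sqfreeInvTotientCorr.IsMultiplicative :=
  isMultiplicative_sqfreeInvTotient.mul (isMultiplicative_moebius.intCast.pmul
    ⟨by simp, fun {m n} _ => invId_mul m n⟩)

theorem sqfreeInvTotientCorr_apply_prime {p : ℕ} (hp : p.Prime) :
    sqfreeInvTotientCorr p = ((p : ℝ) * (p - 1))⁻¹ := by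
  have hp1 : (p : ℝ) - 1 ≠ 0 := sub_ne_zero.mpr (by exact_mod_cast hp.one_lt.ne')
  have hp0 : (p : ℝ) ≠ 0 := by exact_mod_cast hp.ne_zero
  rw [← pow_one p, sqfreeInvTotientCorr, mul_apply_prime_pow _ _ hp]
  simp only [sum_range_succ, range_one, sum_singleton, sqfreeInvTotient_apply_prime_pow hp,
    moebius_pmul_invId_apply_prime_pow hp, tsub_zero, tsub_self, one_ne_zero, ↓reduceIte,
    one_mul, mul_one, pow_one]
  field_simp
  ring

theorem sqfreeInvTotientCorr_apply_prime_sq {p : ℕ} (hp : p.Prime) :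
    sqfreeInvTotientCorr (p ^ 2) = -((p : ℝ) * (p - 1))⁻¹ := by
  rw [sqfreeInvTotientCorr, mul_apply_prime_pow _ _ hp]
  simp [sum_range_succ, sqfreeInvTotient_apply_prime_pow hp, moebius_pmul_invId_apply_prime_pow hp]

theorem sqfreeInvTotientCorr_apply_prime_pow_of_three_le {p k : ℕ} (hp : p.Prime) (hk : 3 ≤ k) :
    sqfreeInvTotientCorr (p ^ k) = 0 := by
  rw [sqfreeInvTotientCorr, mul_apply_prime_pow _ _ hp]
  refine sum_eq_zero fun i hi => ?_
  rw [sqfreeInvTotient_apply_prime_pow hp, moebius_pmul_invId_apply_prime_pow hp]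
  have := mem_range.mp hi
  split_ifs <;> first | omega | simp

theorem hasSum_rpow_mul_abs_sqfreeInvTotientCorr_prime_pow (σ : ℝ) {p : ℕ} (hp : p.Prime) :
    HasSum (fun e => ((p ^ e : ℕ) : ℝ) ^ σ * |sqfreeInvTotientCorr (p ^ e)|)
      (1 + ((p : ℝ) ^ σ + ((p : ℝ) ^ 2) ^ σ) * ((p : ℝ) * (p - 1))⁻¹) := by
  have hpos : 0 ≤ ((p : ℝ) * (p - 1))⁻¹ := by
    have : (1 : ℝ) ≤ p := by exact_mod_cast hp.one_le
    positivity
  convert hasSum_of_forall_three_le_eq_zero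
    (f := fun e => ((p ^ e : ℕ) : ℝ) ^ σ * |sqfreeInvTotientCorr (p ^ e)|) fun e he => by
      simp [sqfreeInvTotientCorr_apply_prime_pow_of_three_le hp he] using 1
  simp only [pow_zero, pow_one, Nat.cast_one, Real.one_rpow, Nat.cast_pow,
    isMultiplicative_sqfreeInvTotientCorr.map_one, sqfreeInvTotientCorr_apply_prime hp,
    sqfreeInvTotientCorr_apply_prime_sq hp, abs_one, abs_neg, abs_of_nonneg hpos]
  ring

theorem summable_rpow_mul_abs_sqfreeInvTotientCorr :
    Summable fun d : ℕ => (d : ℝ) ^ (1 / 4 : ℝ) * |sqfreeInvTotientCorr d| := by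
  have hmult := isMultiplicative_sqfreeInvTotientCorr
  refine summable_of_tsum_prime_pow_le_one_add (c := fun n => 4 * (n : ℝ) ^ (-(3 / 2) : ℝ))
    (by simp) (by simp [hmult.map_one]) (fun {m n} hmn => ?_) (fun n => by positivity)
    ((Real.summable_nat_rpow.mpr (by norm_num)).mul_left 4) (fun n => by positivity)
    (fun hp => (hasSum_rpow_mul_abs_sqfreeInvTotientCorr_prime_pow _ hp).summable)
    (fun {p} hp => ?_)
  · rw [hmult.map_mul_of_coprime hmn, Nat.cast_mul, Real.mul_rpow (by positivity) (by positivity),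
      abs_mul]
    ring
  · rw [(hasSum_rpow_mul_abs_sqfreeInvTotientCorr_prime_pow _ hp).tsum_eq]
    exact (add_le_add_iff_left 1).mpr
      (rpow_quarter_add_mul_inv_le (by exact_mod_cast hp.two_le : (2 : ℝ) ≤ p))

theorem tsum_sqfreeInvTotientCorr_prime_pow {p : ℕ} (hp : p.Prime) :
    ∑' e, sqfreeInvTotientCorr (p ^ e) = 1 := by
  rw [(hasSum_of_forall_three_le_eq_zero fun e he =>
    sqfreeInvTotientCorr_apply_prime_pow_of_three_le hp he).tsum_eq]
  simp only [pow_zero, pow_one, isMultiplicative_sqfreeInvTotientCorr.map_one,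
    sqfreeInvTotientCorr_apply_prime hp, sqfreeInvTotientCorr_apply_prime_sq hp]
  ring

theorem tsum_sqfreeInvTotientCorr : ∑' d, sqfreeInvTotientCorr d = 1 := by
  have hsum : Summable fun d => ‖sqfreeInvTotientCorr d‖ :=
    summable_rpow_mul_abs_sqfreeInvTotientCorr.of_nonneg_of_le (fun _ => norm_nonneg _)
      (abs_le_rpow_mul_abs _ (by norm_num))
  rw [← isMultiplicative_sqfreeInvTotientCorr.eulerProduct_tprod hsum,
    tprod_congr fun p : Nat.Primes => tsum_sqfreeInvTotientCorr_prime_pow p.prop, tprod_one]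

end ArithmeticFunction

theorem abs_sum_sqfreeInvTotient_sub_log_le (N : ℕ) :
    |∑ n ∈ Icc 1 N, (moebius n : ℝ) ^ 2 / n.totient - Real.log N| ≤
      9 * ∑' d : ℕ, (d : ℝ) ^ (1 / 4 : ℝ) * |sqfreeInvTotientCorr d| := by
  have := abs_sum_Icc_mul_invId_sub_log_le sqfreeInvTotientCorr (by norm_num : (0 : ℝ) < 1 / 4)
    summable_rpow_mul_abs_sqfreeInvTotientCorr N
  rw [sqfreeInvTotientCorr_mul_invId, tsum_sqfreeInvTotientCorr, one_mul] at this
  norm_num at this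
  exact this

theorem tendsto_div_log_of_abs_sub_log_le {u : ℕ → ℝ} {C : ℝ}
    (hu : ∀ N, |u N - Real.log N| ≤ C) :
    Tendsto (fun N => u N / Real.log N) atTop (nhds 1) := by
  have hlog : Tendsto (fun N : ℕ => Real.log N) atTop atTop :=
    Real.tendsto_log_atTop.comp tendsto_natCast_atTop_atTop
  have hzero : Tendsto (fun N => (u N - Real.log N) / Real.log N) atTop (nhds 0) := by
    refine squeeze_zero_norm' ?_ (tendsto_const_nhds (x := C) |>.div_atTop hlog)
    filter_upwards [hlog.eventually_gt_atTop 0] with N hN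
    rw [norm_div, Real.norm_eq_abs, Real.norm_of_nonneg hN.le]
    gcongr
    exact hu N
  refine (zero_add (1 : ℝ) ▸ hzero.add_const 1).congr' ?_
  filter_upwards [hlog.eventually_gt_atTop 0] with N hN
  field_simp
  ring

/-- `G = ∑_{n ≤ N} μ(n)²/φ(n) = log N + O(1)`; in particular `G ∼ log N`. -/
theorem G_asymptotic :
    (∃ C : ℝ, ∀ N : ℕ, 1 ≤ N →
      |(∑ n ∈ Finset.Icc 1 N, (ArithmeticFunction.moebius n : ℝ) ^ 2 / Nat.totient n) -
        Real.log N| ≤ C) ∧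
    Filter.Tendsto (fun N : ℕ =>
        (∑ n ∈ Finset.Icc 1 N, (ArithmeticFunction.moebius n : ℝ) ^ 2 / Nat.totient n) /
          Real.log N)
      Filter.atTop (nhds 1) :=
  ⟨⟨_, fun N _ => abs_sum_sqfreeInvTotient_sub_log_le N⟩,
    tendsto_div_log_of_abs_sub_log_le abs_sum_sqfreeInvTotient_sub_log_le⟩
end
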